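/- Let V be a finite-dimensional real vector space with inner product g, J : V → V a linear map with J² = −id which is an isometry for g, and define ω(u,v) = g(Ju, v). Suppose W ⊆ V is a subspace and U ⊆ W is a subspace with U = W^⊥ω ∩ W (the ω-orthogonal of W inside W). If V = J(U) ⊕ W (direct sum) and J(U) is g-orthogonal to W, then the g-orthogonal complement of U inside W, call it W^hor, satisfies: ω restricted to W^hor is nondegenerate. -/

import Mathlib

open scoped RealInnerProductSpace

/-! Suppose `x ∈ W^hor` is `ω`-orthogonal to all of `W^hor`. Since `U` is characteristic in `W`
and `ω` is skew, `x ∈ W` is also `ω`-orthogonal to `U`; as `W = U ⊕ W^hor`, it is then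
`ω`-orthogonal to all of `W`, i.e. `x ∈ U`. But `x ⊥ U`, so `x = 0`. -/

theorem real_inner_map_left_eq_neg_of_isometry {V : Type*} [NormedAddCommGroup V]
    [InnerProductSpace ℝ V] (J : V →ₗ[ℝ] V) (hJ2 : ∀ v : V, J (J v) = -v)
    (hJiso : ∀ u v : V, ⟪J u, J v⟫ = ⟪u, v⟫) (u v : V) :
    ⟪J u, v⟫ = -⟪J v, u⟫ := by
  rw [← hJiso, hJ2, inner_neg_left, real_inner_comm]

theorem Submodule.le_of_le_of_orthogonal_inf_le {𝕜 E : Type*} [RCLike 𝕜]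
    [NormedAddCommGroup E] [InnerProductSpace 𝕜 E] {K W N : Submodule 𝕜 E}
    [K.HasOrthogonalProjection] (hKW : K ≤ W) (hK : K ≤ N) (h : Kᗮ ⊓ W ≤ N) : W ≤ N :=
  sup_orthogonal_inf_of_hasOrthogonalProjection hKW ▸ sup_le hK h

theorem stmt16_general (V : Type*) [NormedAddCommGroup V] [InnerProductSpace ℝ V]
    [FiniteDimensional ℝ V]
    (J : V →ₗ[ℝ] V) (hJ2 : ∀ v : V, J (J v) = -v)
    (hJiso : ∀ u v : V, ⟪J u, J v⟫ = ⟪u, v⟫)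
    (ω : V → V → ℝ) (hω : ∀ u v : V, ω u v = ⟪J u, v⟫)
    (W U : Submodule ℝ V)
    (hU : ∀ u : V, u ∈ U ↔ (u ∈ W ∧ ∀ w' ∈ W, ω u w' = 0)) :
    ∀ x ∈ Uᗮ ⊓ W, x ≠ 0 → ∃ y ∈ Uᗮ ⊓ W, ω x y ≠ 0 := by
  intro x hx hx0
  by_contra! hdeg
  have hUW : U ≤ W := fun u hu => ((hU u).1 hu).1
  have hU_perp : U ≤ (ℝ ∙ J x)ᗮ := fun u hu => by
    rw [Submodule.mem_orthogonal_singleton_iff_inner_right,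
      real_inner_map_left_eq_neg_of_isometry J hJ2 hJiso, ← hω, ((hU u).1 hu).2 x hx.2, neg_zero]
  have hW_perp : W ≤ (ℝ ∙ J x)ᗮ :=
    Submodule.le_of_le_of_orthogonal_inf_le hUW hU_perp fun y hy => by
      rw [Submodule.mem_orthogonal_singleton_iff_inner_right, ← hω]
      exact hdeg y hy
  have hxU : x ∈ U := (hU x).2 ⟨hx.2, fun w hw => by
    rw [hω, ← Submodule.mem_orthogonal_singleton_iff_inner_right]
    exact hW_perp hw⟩
  exact hx0 ((Submodule.mem_bot ℝ).1 (U.inf_orthogonal_eq_bot ▸ ⟨hxU, hx.1⟩))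

/-- Linear-algebra model of the splitting `T_mM = J(t⁰) ⊕ T_mM^G_O`: let `V` be a
finite-dimensional real inner product space, `J` a compatible complex structure
(`J² = −id`, `J` an isometry), and `ω(u,v) = ⟪Ju, v⟫` the associated symplectic form.
Let `W` be a coisotropic subspace with characteristic subspace
`U = {w ∈ W : ω(w,w') = 0 ∀ w' ∈ W}`, and assume `V = J(U) ⊕ W` with `J(U) ⊥ W`.
Then `ω` restricted to `W^hor` (the `g`-orthogonal complement of `U` inside `W`)
is nondegenerate. -/
theorem stmt16 (V : Type*) [NormedAddCommGroup V] [InnerProductSpace ℝ V]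
    [FiniteDimensional ℝ V]
    (J : V →ₗ[ℝ] V) (hJ2 : ∀ v : V, J (J v) = -v)
    (hJiso : ∀ u v : V, ⟪J u, J v⟫ = ⟪u, v⟫)
    (ω : V → V → ℝ) (hω : ∀ u v : V, ω u v = ⟪J u, v⟫)
    (W U : Submodule ℝ V)
    (hU : ∀ u : V, u ∈ U ↔ (u ∈ W ∧ ∀ w' ∈ W, ω u w' = 0))
    (hcompl : IsCompl (U.map J) W)
    (horth : ∀ u ∈ U, ∀ w ∈ W, ⟪J u, w⟫ = 0) :
    ∀ x ∈ Uᗮ ⊓ W, x ≠ 0 → ∃ y ∈ Uᗮ ⊓ W, ω x y ≠ 0 :=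
  stmt16_general V J hJ2 hJiso ω hω W U hU
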